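/- Define SPD trees, W(T), and Cost(T, x) as in context. For every SPD tree T and every c > 0 there exists an assignment x of positive shares to the leaves of T with (sum of all leaf shares) = c and Cost(T, x) = W(T) / c; namely, the assignment obtained by recursively splitting the capacity proportionally to the square roots of the children's W-values at serial nodes and proportionally to the children's W-values at parallel nodes. -/

import Mathlib

/-- SPD trees with leaf data `α`: a leaf, or a serial/parallel composition of a list of
SPD trees. -/
inductive SPD (α : Type) : Type
  | leaf : α → SPD α
  | ser : List (SPD α) → SPD α
  | par : List (SPD α) → SPD α

namespace SPD

/-- Map over leaf data. -/
def map {α β : Type} (f : α → β) : SPD α → SPD β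
  | leaf a => leaf (f a)
  | ser l => ser (l.attach.map fun t => map f t.1)
  | par l => par (l.attach.map fun t => map f t.1)
termination_by t => sizeOf t
decreasing_by
  all_goals have := List.sizeOf_lt_of_mem t.2; simp [SPD.ser.sizeOf_spec, SPD.par.sizeOf_spec] at *; omega

/-- The weight `W(T)` computed by `computeWeights`: the weight of a leaf, the squared
sum of square roots at serial nodes, and the sum at parallel nodes. -/
noncomputable def W : SPD ℝ → ℝ
  | leaf w => w
  | ser l => (l.attach.map fun t => Real.sqrt (W t.1)).sum ^ 2
  | par l => (l.attach.map fun t => W t.1).sum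
termination_by t => sizeOf t
decreasing_by
  all_goals have := List.sizeOf_lt_of_mem t.2; simp at *; omega

/-- The continuous streaming cost of a tree whose leaves carry (weight, share) pairs:
`w / x` at a leaf, the sum at serial nodes, the maximum at parallel nodes. -/
noncomputable def Cost : SPD (ℝ × ℝ) → ℝ
  | leaf p => p.1 / p.2
  | ser l => (l.attach.map fun t => Cost t.1).sum
  | par l => (l.attach.map fun t => Cost t.1).foldr max 0
termination_by t => sizeOf t
decreasing_by
  all_goals have := List.sizeOf_lt_of_mem t.2; simp at *; omega

/-- The total share assigned to the leaves. -/
def shareSum : SPD (ℝ × ℝ) → ℝ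
  | leaf p => p.2
  | ser l => (l.attach.map fun t => shareSum t.1).sum
  | par l => (l.attach.map fun t => shareSum t.1).sum
termination_by t => sizeOf t
decreasing_by
  all_goals have := List.sizeOf_lt_of_mem t.2; simp at *; omega

/-- Validity: leaf weights and shares are positive, and composition lists are nonempty. -/
inductive Valid : SPD (ℝ × ℝ) → Prop
  | leaf {p : ℝ × ℝ} : 0 < p.1 → 0 < p.2 → Valid (SPD.leaf p)
  | ser {l} : l ≠ [] → (∀ t ∈ l, Valid t) → Valid (SPD.ser l)
  | par {l} : l ≠ [] → (∀ t ∈ l, Valid t) → Valid (SPD.par l)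

end SPD

/-- Positive weights and nonempty compositions for a weight tree. -/
inductive SPD.PosWeights : SPD ℝ → Prop
  | leaf {w : ℝ} : 0 < w → SPD.PosWeights (SPD.leaf w)
  | ser {l} : l ≠ [] → (∀ t ∈ l, SPD.PosWeights t) → SPD.PosWeights (SPD.ser l)
  | par {l} : l ≠ [] → (∀ t ∈ l, SPD.PosWeights t) → SPD.PosWeights (SPD.par l)

/-! At a serial node the capacity `c` is split in proportion to `√W(Tᵢ)`, i.e.
`cᵢ = √W(Tᵢ) c / S` with `S = ∑ √W(Tᵢ)`; by induction the children cost
`W(Tᵢ) / cᵢ = √W(Tᵢ) S / c`, and these add up to `S² / c`. At a parallel node the split in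
proportion to `W(Tᵢ)` makes every child cost `(∑ W(Tᵢ)) / c`, which is then also their maximum.
Positive weights keep all shares positive. -/

theorem List.foldr_max_eq_of_forall_eq {α : Type*} [LinearOrder α] {L : List α} {a : α}
    (b : α) (hL : L ≠ []) (h : ∀ x ∈ L, x = a) : L.foldr max b = max a b := by
  induction L with
  | nil => exact absurd rfl hL
  | cons x L ih =>
    rw [h x List.mem_cons_self, List.foldr_cons]
    rcases eq_or_ne L [] with rfl | hne
    · rfl
    · rw [ih hne fun y hy => h y (List.mem_cons_of_mem x hy), ← max_assoc, max_self]

theorem List.sum_map_div_sum_mul {ι K : Type*} [DivisionRing K] (l : List ι) (f : ι → K)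
    (hf : (l.map f).sum ≠ 0) (c : K) : (l.map fun i => f i / (l.map f).sum * c).sum = c := by
  simp only [div_eq_mul_inv, mul_assoc]
  rw [List.sum_map_mul_right, ← mul_assoc, mul_inv_cancel₀ hf, one_mul]

namespace SPD

@[elab_as_elim, induction_eliminator]
theorem induction_mem {α : Type} {motive : SPD α → Prop} (leaf : ∀ a, motive (leaf a))
    (ser : ∀ l, (∀ t ∈ l, motive t) → motive (ser l))
    (par : ∀ l, (∀ t ∈ l, motive t) → motive (par l)) : ∀ T, motive T
  | .leaf a => leaf a
  | .ser l => ser l fun t _ => induction_mem leaf ser par t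
  | .par l => par l fun t _ => induction_mem leaf ser par t
termination_by T => sizeOf T
decreasing_by
  all_goals have := List.sizeOf_lt_of_mem ‹t ∈ l›; simp; omega

@[simp] theorem map_ser {α β : Type} (f : α → β) (l : List (SPD α)) :
    map f (ser l) = ser (l.map (map f)) := by
  rw [map, List.attach_map_val]

@[simp] theorem map_par {α β : Type} (f : α → β) (l : List (SPD α)) :
    map f (par l) = par (l.map (map f)) := by
  rw [map, List.attach_map_val]

@[simp] theorem W_ser (l : List (SPD ℝ)) : W (ser l) = (l.map fun t => √(W t)).sum ^ 2 := by
  rw [W, List.attach_map_val (f := fun t => √(W t))]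

@[simp] theorem W_par (l : List (SPD ℝ)) : W (par l) = (l.map W).sum := by
  rw [W, List.attach_map_val]

@[simp] theorem Cost_ser (l : List (SPD (ℝ × ℝ))) : Cost (ser l) = (l.map Cost).sum := by
  rw [Cost, List.attach_map_val]

@[simp] theorem Cost_par (l : List (SPD (ℝ × ℝ))) :
    Cost (par l) = (l.map Cost).foldr max 0 := by
  rw [Cost, List.attach_map_val]

@[simp] theorem shareSum_ser (l : List (SPD (ℝ × ℝ))) :
    shareSum (ser l) = (l.map shareSum).sum := by
  rw [shareSum, List.attach_map_val]

@[simp] theorem shareSum_par (l : List (SPD (ℝ × ℝ))) :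
    shareSum (par l) = (l.map shareSum).sum := by
  rw [shareSum, List.attach_map_val]

theorem W_pos {T : SPD ℝ} (hT : PosWeights T) : 0 < W T := by
  induction hT with
  | leaf hw => rwa [W]
  | @ser l hne _ ih =>
    have : 0 < (l.map fun t => √(W t)).sum :=
      List.sum_pos _ (by simpa using ih) (by simpa using hne)
    rw [W_ser]
    positivity
  | @par l hne _ ih =>
    rw [W_par]
    exact List.sum_pos _ (by simpa using ih) (by simpa using hne)

theorem sum_sqrt_W_pos {l : List (SPD ℝ)} (hne : l ≠ []) (hl : ∀ t ∈ l, PosWeights t) :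
    0 < (l.map fun t => √(W t)).sum :=
  List.sum_pos _ (by simpa using fun t ht => W_pos (hl t ht)) (by simpa using hne)

theorem sum_W_pos {l : List (SPD ℝ)} (hne : l ≠ []) (hl : ∀ t ∈ l, PosWeights t) :
    0 < (l.map W).sum :=
  List.sum_pos _ (by simpa using fun t ht => W_pos (hl t ht)) (by simpa using hne)

/-- The mapping computed by `computeMapping`. -/
noncomputable def assignShares : SPD ℝ → ℝ → SPD (ℝ × ℝ)
  | leaf w, c => leaf (w, c)
  | ser l, c => ser (l.attach.map fun t =>
      assignShares t.1 (√(W t.1) / (l.map fun s => √(W s)).sum * c))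
  | par l, c => par (l.attach.map fun t =>
      assignShares t.1 (W t.1 / (l.map W).sum * c))
termination_by T => sizeOf T
decreasing_by
  all_goals have := List.sizeOf_lt_of_mem t.2; simp; omega

@[simp] theorem assignShares_ser (l : List (SPD ℝ)) (c : ℝ) :
    assignShares (ser l) c =
      ser (l.map fun t => assignShares t (√(W t) / (l.map fun s => √(W s)).sum * c)) := by
  rw [assignShares, List.attach_map_val
    (f := fun t => assignShares t (√(W t) / (l.map fun s => √(W s)).sum * c))]

@[simp] theorem assignShares_par (l : List (SPD ℝ)) (c : ℝ) :
    assignShares (par l) c = par (l.map fun t => assignShares t (W t / (l.map W).sum * c)) := by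
  rw [assignShares, List.attach_map_val (f := fun t => assignShares t (W t / (l.map W).sum * c))]

theorem map_fst_assignShares (T : SPD ℝ) (c : ℝ) : map Prod.fst (assignShares T c) = T := by
  induction T generalizing c with
  | leaf w => rw [assignShares, map]
  | ser l ih =>
    rw [assignShares_ser, map_ser, List.map_map]
    exact congrArg ser ((List.map_congr_left (g := id) fun t ht => ih t ht _).trans l.map_id)
  | par l ih =>
    rw [assignShares_par, map_par, List.map_map]
    exact congrArg par ((List.map_congr_left (g := id) fun t ht => ih t ht _).trans l.map_id)

theorem valid_assignShares {T : SPD ℝ} (hT : PosWeights T) {c : ℝ} (hc : 0 < c) :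
    Valid (assignShares T c) := by
  induction hT generalizing c with
  | leaf hw => rw [assignShares]; exact .leaf hw hc
  | @ser l hne hl ih =>
    have hS := sum_sqrt_W_pos hne hl
    rw [assignShares_ser]
    refine .ser (by simpa using hne) ?_
    simp only [List.mem_map]
    rintro _ ⟨t, ht, rfl⟩
    exact ih t ht (by have := W_pos (hl t ht); positivity)
  | @par l hne hl ih =>
    have hS := sum_W_pos hne hl
    rw [assignShares_par]
    refine .par (by simpa using hne) ?_
    simp only [List.mem_map]
    rintro _ ⟨t, ht, rfl⟩
    exact ih t ht (by have := W_pos (hl t ht); positivity)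

theorem shareSum_assignShares {T : SPD ℝ} (hT : PosWeights T) (c : ℝ) :
    shareSum (assignShares T c) = c := by
  induction hT generalizing c with
  | leaf _ => rw [assignShares, shareSum]
  | @ser l hne hl ih =>
    rw [assignShares_ser, shareSum_ser, List.map_map, Function.comp_def,
      List.map_congr_left (g := fun t => √(W t) / _ * c) fun t ht => ih t ht _]
    exact List.sum_map_div_sum_mul l _ (sum_sqrt_W_pos hne hl).ne' c
  | @par l hne hl ih =>
    rw [assignShares_par, shareSum_par, List.map_map, Function.comp_def,
      List.map_congr_left (g := fun t => W t / _ * c) fun t ht => ih t ht _]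
    exact List.sum_map_div_sum_mul l _ (sum_W_pos hne hl).ne' c

theorem Cost_assignShares {T : SPD ℝ} (hT : PosWeights T) {c : ℝ} (hc : 0 < c) :
    Cost (assignShares T c) = W T / c := by
  induction hT generalizing c with
  | leaf _ => rw [assignShares, Cost, W]
  | @ser l hne hl ih =>
    set S := (l.map fun s => √(W s)).sum
    have hS := sum_sqrt_W_pos hne hl
    have hcost : ∀ t ∈ l, Cost (assignShares t (√(W t) / S * c)) = √(W t) * (S / c) := by
      intro t ht
      have hWt := W_pos (hl t ht)
      have hsqrt := Real.sqrt_pos.2 hWt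
      rw [ih t ht (by positivity)]
      field_simp
      rw [Real.sq_sqrt hWt.le]
    rw [assignShares_ser, Cost_ser, W_ser, List.map_map, Function.comp_def,
      List.map_congr_left hcost, List.sum_map_mul_right]
    ring
  | @par l hne hl ih =>
    set S := (l.map W).sum
    have hS := sum_W_pos hne hl
    have hcost : ∀ x ∈ l.map (fun t => Cost (assignShares t (W t / S * c))), x = S / c := by
      simp only [List.mem_map]
      rintro _ ⟨t, ht, rfl⟩
      have hWt := W_pos (hl t ht)
      rw [ih t ht (by positivity)]
      field_simp
    rw [assignShares_par, Cost_par, W_par, List.map_map, Function.comp_def,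
      List.foldr_max_eq_of_forall_eq 0 (by simpa using hne) hcost, max_eq_left (by positivity)]

end SPD

/-- Optimality of `𝒜^cont`, attainment part: for every SPD weight tree `T` (positive
leaf weights, nonempty compositions) and every capacity `c > 0`, there is an assignment
of positive shares to the leaves of `T` summing to `c` whose continuous streaming cost
is exactly `W(T)/c`. -/
theorem exists_shares_cost_eq_W_div_c (T : SPD ℝ) (hT : SPD.PosWeights T)
    (c : ℝ) (hc : 0 < c) :
    ∃ A : SPD (ℝ × ℝ), SPD.map Prod.fst A = T ∧ SPD.Valid A ∧
      SPD.shareSum A = c ∧ SPD.Cost A = SPD.W T / c :=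
  ⟨T.assignShares c, T.map_fst_assignShares c, SPD.valid_assignShares hT hc,
    SPD.shareSum_assignShares hT c, SPD.Cost_assignShares hT hc⟩
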